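/- (Pointwise correctness of the constrained hinge-loss minimizer.) Let d, k, n be positive integers, γ, σ, C > 0, η ∈ (0,1) and τ ∈ (0, γ/4). Let w* ∈ ℝ^{kd} with ‖w*‖₂ ≤ 1. Let I be a finite index set with |I| ≤ n, partitioned into a clean part Cl and a dirty part D, with samples (x_i, y_i) ∈ ℝ^d × {1,…,k}. Assume: (i) for every i ∈ Cl and every y' ≠ y_i, ⟨w*_{y_i} − w*_{y'}, x_i⟩ ≥ γ; (ii) |D| ≤ ηn, and there exist centers μ_i ∈ ℝ^d (i ∈ D) such that for every i ∈ D and every y' ≠ y_i, ⟨w*_{y_i} − w*_{y'}, μ_i⟩ ≥ γ, and for every subset T ⊆ D, ‖Σ_{i∈T}(x_i − μ_i)‖₂ ≤ C·σ·√(|T|·n). Let ŵ be a minimizer of w ↦ Σ_{i∈I} ℓ_γ(w;(x_i,y_i)) over the closed unit ball {w ∈ ℝ^{kd} : ‖w‖₂ ≤ 1}. Let (x,y) ∈ ℝ^d × {1,…,k} and set S_P := { i ∈ Cl : (x_i, y_i) ∈ P_ŵ^τ(x,y) }. If |S_P| > 8Cσn√η / γ, then (x,y) is not misclassified by ŵ,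 i.e., ⟨ŵ_y, x⟩ ≥ ⟨ŵ_{y'}, x⟩ for every y' ∈ {1,…,k}. -/

import Mathlib

open scoped BigOperators RealInnerProductSpace
open Finset

/-- The class-sensitive feature map `Ψ : ℝ^d × {1,…,k} → ℝ^{kd}`: the `y`-th block of
`d` coordinates of `Psi d k x y` equals `x`, the remaining coordinates are zero. -/
noncomputable def Psi (d k : ℕ) (x : EuclideanSpace ℝ (Fin d)) (y : Fin k) :
    EuclideanSpace ℝ (Fin k × Fin d) :=
  WithLp.toLp 2 (fun p : Fin k × Fin d => if p.1 = y then x p.2 else 0)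

/-- The `y`-th block `w_y ∈ ℝ^d` of a vector `w ∈ ℝ^{kd}`. -/
noncomputable def block (d k : ℕ) (w : EuclideanSpace ℝ (Fin k × Fin d)) (y : Fin k) :
    EuclideanSpace ℝ (Fin d) :=
  WithLp.toLp 2 (fun j => w (y, j))

/-- The multiclass pancake `P_w^τ(x,y)`: pairs `(x',y')` with `y' = y` and
`|⟨w_ȳ, x' − x⟩| ≤ τ` for every label `ȳ`. -/
def pancake (d k : ℕ) (w : EuclideanSpace ℝ (Fin k × Fin d)) (τ : ℝ)
    (x : EuclideanSpace ℝ (Fin d)) (y : Fin k) :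
    Set (EuclideanSpace ℝ (Fin d) × Fin k) :=
  {p | p.2 = y ∧ ∀ ybar : Fin k, |⟪block d k w ybar, p.1 - x⟫| ≤ τ}

/-- The γ-scaled multiclass hinge loss
`ℓ_γ(w;(x,y)) = max_{y'} (1[y' ≠ y] − (1/γ)·⟨w, Ψ(x,y) − Ψ(x,y')⟩)`. -/
noncomputable def hinge (d k : ℕ) [NeZero k] (γ : ℝ)
    (w : EuclideanSpace ℝ (Fin k × Fin d)) (x : EuclideanSpace ℝ (Fin d)) (y : Fin k) : ℝ :=
  Finset.univ.sup' Finset.univ_nonempty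
    (fun y' : Fin k => (if y' ≠ y then (1:ℝ) else 0) - (1/γ) * ⟪w, Psi d k x y - Psi d k x y'⟫)

/-!
Suppose `ŵ` preferred some label `y'` to `y₀` at `x₀`. Every clean point of the pancake has label
`y₀`, and its `ŵ`-margin between `y₀` and `y'` is within `2τ < γ/2` of the (negative) one at `x₀`,
so it pays hinge loss at least `1/2`: the loss of `ŵ` is at least `|S_P|/2`.

The competitor `w*` is feasible and pays nothing on clean points. On a dirty point the margin holds
at the centre `μᵢ`, so its loss is at most `⟪w*, Ψ(xᵢ - μᵢ, bᵢ) - Ψ(xᵢ - μᵢ, yᵢ)⟫ / γ` for some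
label `bᵢ`. The `a`-th block of `∑ᵢ Ψ(vᵢ, f i)` is the sum of `vᵢ` over the class `f i = a`, so
the deviation bound applied class by class controls `‖∑ᵢ Ψ(xᵢ - μᵢ, f i)‖ ≤ Cσ√(|D| n)`, and the
loss of `w*` is at most `2Cσn√η/γ`. Optimality of `ŵ` then forces `|S_P| ≤ 4Cσn√η/γ`.
-/

section

variable {ι : Type*} {d k : ℕ}

lemma inner_Psi (w : EuclideanSpace ℝ (Fin k × Fin d)) (x : EuclideanSpace ℝ (Fin d)) (a : Fin k) :
    ⟪w, Psi d k x a⟫ = ⟪block d k w a, x⟫ := by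
  simp only [PiLp.inner_apply, Psi, block, RCLike.inner_apply, conj_trivial, Fintype.sum_prod_type]
  rw [Finset.sum_eq_single a (fun b _ hb => by simp [hb]) (by simp)]
  simp

lemma block_sum_Psi (s : Finset ι) (v : ι → EuclideanSpace ℝ (Fin d)) (f : ι → Fin k)
    (a : Fin k) : block d k (∑ i ∈ s, Psi d k (v i) (f i)) a = ∑ i ∈ s with f i = a, v i := by
  ext j
  simp only [block, Psi, Finset.sum_filter, WithLp.ofLp_sum, Finset.sum_apply, PiLp.toLp_apply]
  refine sum_congr rfl fun i _ => ?_
  by_cases h : f i = a <;> simp [h, Ne.symm]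

lemma sum_norm_block_sq (w : EuclideanSpace ℝ (Fin k × Fin d)) :
    ∑ a, ‖block d k w a‖ ^ 2 = ‖w‖ ^ 2 := by
  simp only [EuclideanSpace.norm_sq_eq, Fintype.sum_prod_type]
  rfl

lemma norm_sum_Psi_sq_le [DecidableEq ι] (s : Finset ι) (v : ι → EuclideanSpace ℝ (Fin d))
    (f : ι → Fin k) {c : ℝ} (hv : ∀ T ⊆ s, ‖∑ i ∈ T, v i‖ ^ 2 ≤ c * #T) :
    ‖∑ i ∈ s, Psi d k (v i) (f i)‖ ^ 2 ≤ c * #s := by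
  rw [← sum_norm_block_sq]
  simp only [block_sum_Psi]
  calc ∑ a, ‖∑ i ∈ s with f i = a, v i‖ ^ 2
      ≤ ∑ a, c * #{i ∈ s | f i = a} := sum_le_sum fun a _ => hv _ (filter_subset _ _)
    _ = c * #s := by
      rw [← mul_sum, card_eq_sum_card_fiberwise (fun i _ => mem_univ (f i))]
      push_cast
      rfl

lemma norm_sum_Psi_le [DecidableEq ι] (s : Finset ι) (v : ι → EuclideanSpace ℝ (Fin d))
    (f : ι → Fin k) {c m : ℝ} (hc : 0 ≤ c) (hm : 0 ≤ m)
    (hv : ∀ T ⊆ s, ‖∑ i ∈ T, v i‖ ≤ c * √(#T * m)) :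
    ‖∑ i ∈ s, Psi d k (v i) (f i)‖ ≤ c * √(#s * m) := by
  have hsq : ∀ T ⊆ s, ‖∑ i ∈ T, v i‖ ^ 2 ≤ c ^ 2 * m * #T := fun T hT => by
    calc ‖∑ i ∈ T, v i‖ ^ 2 ≤ (c * √(#T * m)) ^ 2 := pow_le_pow_left₀ (norm_nonneg _) (hv T hT) 2
      _ = c ^ 2 * m * #T := by rw [mul_pow, Real.sq_sqrt (by positivity)]; ring
  calc ‖∑ i ∈ s, Psi d k (v i) (f i)‖ ≤ √(c ^ 2 * m * #s) :=
        Real.le_sqrt_of_sq_le (norm_sum_Psi_sq_le s v f hsq)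
    _ = c * √(#s * m) := by
      rw [show c ^ 2 * m * #s = c ^ 2 * (#s * m) by ring, Real.sqrt_mul (by positivity),
        Real.sqrt_sq hc]

section hinge

variable [NeZero k] {γ : ℝ}

lemma hinge_eq_sup' (w : EuclideanSpace ℝ (Fin k × Fin d)) (x : EuclideanSpace ℝ (Fin d))
    (y : Fin k) :
    hinge d k γ w x y = univ.sup' univ_nonempty fun b =>
      (if b ≠ y then 1 else 0) - (⟪block d k w y, x⟫ - ⟪block d k w b, x⟫) / γ := by
  simp only [hinge, inner_sub_right, inner_Psi, one_div_mul_eq_div]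

lemma le_hinge (w : EuclideanSpace ℝ (Fin k × Fin d)) (x : EuclideanSpace ℝ (Fin d))
    (y b : Fin k) :
    (if b ≠ y then 1 else 0) - (⟪block d k w y, x⟫ - ⟪block d k w b, x⟫) / γ
      ≤ hinge d k γ w x y := by
  rw [hinge_eq_sup']
  exact le_sup' (fun b => (if b ≠ y then 1 else 0) -
    (⟪block d k w y, x⟫ - ⟪block d k w b, x⟫) / γ) (mem_univ b)

lemma hinge_nonneg (w : EuclideanSpace ℝ (Fin k × Fin d)) (x : EuclideanSpace ℝ (Fin d))
    (y : Fin k) : 0 ≤ hinge d k γ w x y := by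
  simpa using le_hinge (γ := γ) w x y y

lemma hinge_nonpos_of_margin (hγ : 0 < γ) {w : EuclideanSpace ℝ (Fin k × Fin d)}
    {x : EuclideanSpace ℝ (Fin d)} {y : Fin k}
    (hmargin : ∀ b ≠ y, γ ≤ ⟪block d k w y - block d k w b, x⟫) :
    hinge d k γ w x y ≤ 0 := by
  rw [hinge_eq_sup']
  refine sup'_le _ _ fun b _ => ?_
  by_cases hb : b = y
  · simp [hb]
  have h := hmargin b hb
  rw [inner_sub_left] at h
  rw [if_pos hb, sub_nonpos, le_div_iff₀ hγ]
  linarith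

lemma exists_hinge_le_of_margin_center (hγ : 0 < γ) {w : EuclideanSpace ℝ (Fin k × Fin d)}
    (x : EuclideanSpace ℝ (Fin d)) {μ : EuclideanSpace ℝ (Fin d)} {y : Fin k}
    (hmargin : ∀ b ≠ y, γ ≤ ⟪block d k w y - block d k w b, μ⟫) :
    ∃ b, hinge d k γ w x y ≤ ⟪w, Psi d k (x - μ) b - Psi d k (x - μ) y⟫ / γ := by
  rw [hinge_eq_sup']
  obtain ⟨b, -, hb⟩ := exists_mem_eq_sup' (univ_nonempty (α := Fin k)) fun b =>
    (if b ≠ y then (1 : ℝ) else 0) - (⟪block d k w y, x⟫ - ⟪block d k w b, x⟫) / γ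
  refine ⟨b, ?_⟩
  rw [hb, inner_sub_right, inner_Psi, inner_Psi]
  by_cases hby : b = y
  · simp [hby]
  have h := hmargin b hby
  simp only [inner_sub_left, inner_sub_right] at h ⊢
  rw [if_pos hby, ← sub_nonneg]
  have : 0 ≤ (⟪block d k w y, μ⟫ - ⟪block d k w b, μ⟫ - γ) / γ := div_nonneg (by linarith) hγ.le
  convert this using 1
  field_simp
  ring

lemma sum_hinge_le_of_margin_center [DecidableEq ι] (hγ : 0 < γ) (s : Finset ι)
    (w : EuclideanSpace ℝ (Fin k × Fin d)) (x μ : ι → EuclideanSpace ℝ (Fin d)) (y : ι → Fin k)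
    {c m : ℝ} (hc : 0 ≤ c) (hm : 0 ≤ m)
    (hmargin : ∀ i ∈ s, ∀ b ≠ y i, γ ≤ ⟪block d k w (y i) - block d k w b, μ i⟫)
    (hdev : ∀ T ⊆ s, ‖∑ i ∈ T, (x i - μ i)‖ ≤ c * √(#T * m)) :
    ∑ i ∈ s, hinge d k γ w (x i) (y i) ≤ 2 * ‖w‖ * (c * √(#s * m)) / γ := by
  choose! b hb using fun i hi => exists_hinge_le_of_margin_center hγ (x i) (hmargin i hi)
  have hnorm (f : ι → Fin k) : ‖∑ i ∈ s, Psi d k (x i - μ i) (f i)‖ ≤ c * √(#s * m) :=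
    norm_sum_Psi_le s (fun i => x i - μ i) f hc hm hdev
  calc ∑ i ∈ s, hinge d k γ w (x i) (y i)
      ≤ ∑ i ∈ s, ⟪w, Psi d k (x i - μ i) (b i) - Psi d k (x i - μ i) (y i)⟫ / γ := sum_le_sum hb
    _ = ⟪w, ∑ i ∈ s, Psi d k (x i - μ i) (b i) - ∑ i ∈ s, Psi d k (x i - μ i) (y i)⟫ / γ := by
      rw [← sum_div, ← sum_sub_distrib, inner_sum]
    _ ≤ ‖w‖ * (c * √(#s * m) + c * √(#s * m)) / γ := by
      gcongr
      exact (real_inner_le_norm _ _).trans <| mul_le_mul_of_nonneg_left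
        ((norm_sub_le _ _).trans (add_le_add (hnorm b) (hnorm y))) (norm_nonneg w)
    _ = 2 * ‖w‖ * (c * √(#s * m)) / γ := by ring

lemma half_le_hinge_of_mem_pancake (hγ : 0 < γ) {τ : ℝ} (hτ : τ < γ / 4)
    {w : EuclideanSpace ℝ (Fin k × Fin d)} {x₀ x : EuclideanSpace ℝ (Fin d)} {y₀ y' y : Fin k}
    (hy' : ⟪block d k w y₀, x₀⟫ < ⟪block d k w y', x₀⟫) (hx : (x, y) ∈ pancake d k w τ x₀ y₀) :
    1 / 2 ≤ hinge d k γ w x y := by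
  obtain ⟨rfl : y = y₀, hclose⟩ := hx
  have hne : y' ≠ y := by rintro rfl; exact lt_irrefl _ hy'
  have h₀ := abs_le.1 (hclose y)
  have h' := abs_le.1 (hclose y')
  simp only [inner_sub_right] at h₀ h'
  refine le_trans ?_ (le_hinge w x y y')
  rw [if_pos hne, le_sub_comm, div_le_iff₀ hγ]
  linarith

end hinge

end

open scoped Classical in
theorem stmt_16_general {ι : Type*} [DecidableEq ι] (d k n : ℕ) [NeZero k]
    (γ σ C : ℝ) (hγ : 0 < γ) (hσ : 0 < σ) (hC : 0 < C)
    (η : ℝ) (τ : ℝ) (hτγ : τ < γ / 4)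
    (wstar : EuclideanSpace ℝ (Fin k × Fin d)) (hwstar : ‖wstar‖ ≤ 1)
    (Cl D : Finset ι) (hClD : Disjoint Cl D)
    (x : ι → EuclideanSpace ℝ (Fin d)) (y : ι → Fin k)
    (hmargin : ∀ i ∈ Cl, ∀ y' : Fin k, y' ≠ y i →
      γ ≤ ⟪block d k wstar (y i) - block d k wstar y', x i⟫)
    (hDcard : (D.card : ℝ) ≤ η * n)
    (μ : ι → EuclideanSpace ℝ (Fin d))
    (hDmargin : ∀ i ∈ D, ∀ y' : Fin k, y' ≠ y i →
      γ ≤ ⟪block d k wstar (y i) - block d k wstar y', μ i⟫)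
    (hDdev : ∀ T ⊆ D, ‖∑ i ∈ T, (x i - μ i)‖ ≤ C * σ * Real.sqrt (T.card * n))
    (what : EuclideanSpace ℝ (Fin k × Fin d))
    (hmin : ∀ w : EuclideanSpace ℝ (Fin k × Fin d), ‖w‖ ≤ 1 →
      ∑ i ∈ Cl ∪ D, hinge d k γ what (x i) (y i) ≤ ∑ i ∈ Cl ∪ D, hinge d k γ w (x i) (y i))
    (x₀ : EuclideanSpace ℝ (Fin d)) (y₀ : Fin k)
    (hSP : 8 * C * σ * n * Real.sqrt η / γ <
      (((Cl.filter fun i => (x i, y i) ∈ pancake d k what τ x₀ y₀).card : ℕ) : ℝ)) :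
    ∀ y' : Fin k, ⟪block d k what y', x₀⟫ ≤ ⟪block d k what y₀, x₀⟫ := by
  intro y'
  by_contra! hy'
  set SP := Cl.filter fun i => (x i, y i) ∈ pancake d k what τ x₀ y₀
  have hlower : (#SP : ℝ) / 2 ≤ ∑ i ∈ Cl ∪ D, hinge d k γ what (x i) (y i) :=
    calc (#SP : ℝ) / 2 = ∑ _i ∈ SP, (1 / 2 : ℝ) := by
          rw [sum_const, nsmul_eq_mul]; ring
      _ ≤ ∑ i ∈ SP, hinge d k γ what (x i) (y i) := sum_le_sum fun i hi =>
          half_le_hinge_of_mem_pancake hγ hτγ hy' (mem_filter.1 hi).2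
      _ ≤ _ := sum_le_sum_of_subset_of_nonneg ((filter_subset _ _).trans subset_union_left)
          fun i _ _ => hinge_nonneg _ _ _
  have hclean : ∑ i ∈ Cl, hinge d k γ wstar (x i) (y i) ≤ 0 :=
    sum_nonpos fun i hi => hinge_nonpos_of_margin hγ (hmargin i hi)
  have hsqrt : √(#D * n) ≤ n * √η :=
    calc √(#D * n) ≤ √(n ^ 2 * η) := Real.sqrt_le_sqrt <|
          calc (#D * n : ℝ) ≤ η * n * n := by gcongr
            _ = n ^ 2 * η := by ring
      _ = n * √η := by rw [Real.sqrt_mul (by positivity), Real.sqrt_sq (by positivity)]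
  have hdirty : ∑ i ∈ D, hinge d k γ wstar (x i) (y i) ≤ 2 * (C * σ * n * √η) / γ := by
    refine (sum_hinge_le_of_margin_center hγ D wstar x μ y (by positivity) n.cast_nonneg
      hDmargin hDdev).trans (div_le_div_of_nonneg_right ?_ hγ.le)
    calc 2 * ‖wstar‖ * (C * σ * √(#D * n)) ≤ 2 * 1 * (C * σ * (n * √η)) := by gcongr
      _ = 2 * (C * σ * n * √η) := by ring
  have hstar : ∑ i ∈ Cl ∪ D, hinge d k γ wstar (x i) (y i) ≤ 2 * (C * σ * n * √η) / γ := by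
    rw [sum_union hClD]
    linarith
  have hbound_nonneg : 0 ≤ 2 * (C * σ * n * √η) / γ := by positivity
  have hrhs : 8 * C * σ * n * √η / γ = 4 * (2 * (C * σ * n * √η) / γ) := by ring
  linarith [hlower.trans ((hmin wstar hwstar).trans hstar)]

open scoped Classical in
/-- pointwise correctness of the constrained hinge-loss minimizer. -/
theorem stmt_16 {ι : Type*} [DecidableEq ι] (d k n : ℕ) [NeZero k] (hd : 0 < d) (hn : 0 < n)
    (γ σ C : ℝ) (hγ : 0 < γ) (hσ : 0 < σ) (hC : 0 < C)
    (η : ℝ) (hη0 : 0 < η) (hη1 : η < 1) (τ : ℝ) (hτ0 : 0 < τ) (hτγ : τ < γ / 4)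
    (wstar : EuclideanSpace ℝ (Fin k × Fin d)) (hwstar : ‖wstar‖ ≤ 1)
    (Cl D : Finset ι) (hClD : Disjoint Cl D) (hI : ((Cl ∪ D).card : ℝ) ≤ n)
    (x : ι → EuclideanSpace ℝ (Fin d)) (y : ι → Fin k)
    (hmargin : ∀ i ∈ Cl, ∀ y' : Fin k, y' ≠ y i →
      γ ≤ ⟪block d k wstar (y i) - block d k wstar y', x i⟫)
    (hDcard : (D.card : ℝ) ≤ η * n)
    (μ : ι → EuclideanSpace ℝ (Fin d))
    (hDmargin : ∀ i ∈ D, ∀ y' : Fin k, y' ≠ y i →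
      γ ≤ ⟪block d k wstar (y i) - block d k wstar y', μ i⟫)
    (hDdev : ∀ T ⊆ D, ‖∑ i ∈ T, (x i - μ i)‖ ≤ C * σ * Real.sqrt (T.card * n))
    (what : EuclideanSpace ℝ (Fin k × Fin d)) (hwhat : ‖what‖ ≤ 1)
    (hmin : ∀ w : EuclideanSpace ℝ (Fin k × Fin d), ‖w‖ ≤ 1 →
      ∑ i ∈ Cl ∪ D, hinge d k γ what (x i) (y i) ≤ ∑ i ∈ Cl ∪ D, hinge d k γ w (x i) (y i))
    (x₀ : EuclideanSpace ℝ (Fin d)) (y₀ : Fin k)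
    (hSP : 8 * C * σ * n * Real.sqrt η / γ <
      (((Cl.filter fun i => (x i, y i) ∈ pancake d k what τ x₀ y₀).card : ℕ) : ℝ)) :
    ∀ y' : Fin k, ⟪block d k what y', x₀⟫ ≤ ⟪block d k what y₀, x₀⟫ :=
  stmt_16_general d k n γ σ C hγ hσ hC η τ hτγ wstar hwstar Cl D hClD x y hmargin hDcard μ hDmargin
    hDdev what hmin x₀ y₀ hSP
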